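/- arXiv:1710.03026 — 8 statements merged into one kernel-verified Lean document; each statement's English description precedes it below -/
import Mathlib

section
/- Let (b_n) be the Baum–Sweet sequence over F_2. Then the Nth well-distribution measure satisfies W(b_n, N) ≥ ⌊(N+1)/4⌋ for all N ≥ 1. -/
/-!
Every index `4j + 2` is even and not divisible by `4`, so the Baum–Sweet sequence vanishes there.
With `T = ⌊(N+1)/4⌋`, the progression `2, 6, …, 4T - 2` stays below `N`, and its character sum
is `T`.
-/

/-- The `N`th well-distribution measure of a binary sequence:
`W(s,N) = max |∑_{j<t} (-1)^{s_{a+jb}}|` over `a ≥ 0`, `b,t ≥ 1` with `a+(t-1)b < N`. -/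
noncomputable def Wmeasure (s : ℕ → ZMod 2) (N : ℕ) : ℤ :=
  sSup {x : ℤ | ∃ a b t : ℕ, 1 ≤ b ∧ 1 ≤ t ∧ a + (t - 1) * b < N ∧
    x = |∑ j ∈ Finset.range t, (-1 : ℤ) ^ (s (a + j * b)).val|}

open Finset

theorem abs_sum_neg_one_pow_le (f : ℕ → ℕ) (t : ℕ) :
    |∑ j ∈ range t, (-1 : ℤ) ^ f j| ≤ t :=
  calc |∑ j ∈ range t, (-1 : ℤ) ^ f j|
      ≤ ∑ j ∈ range t, |(-1 : ℤ) ^ f j| := abs_sum_le_sum_abs _ _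
    _ = t := by simp

theorem Wmeasure_set_bddAbove (s : ℕ → ZMod 2) (N : ℕ) :
    BddAbove {x : ℤ | ∃ a b t : ℕ, 1 ≤ b ∧ 1 ≤ t ∧ a + (t - 1) * b < N ∧
      x = |∑ j ∈ range t, (-1 : ℤ) ^ (s (a + j * b)).val|} := by
  refine ⟨N, ?_⟩
  rintro x ⟨a, d, t, hd, ht, hlt, rfl⟩
  have htN : t ≤ N := by have := Nat.le_mul_of_pos_right (t - 1) hd; omega
  exact (abs_sum_neg_one_pow_le _ t).trans (by exact_mod_cast htN)

theorem abs_sum_le_Wmeasure (s : ℕ → ZMod 2) {N a d t : ℕ} (hd : 1 ≤ d) (ht : 1 ≤ t)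
    (hlt : a + (t - 1) * d < N) :
    |∑ j ∈ range t, (-1 : ℤ) ^ (s (a + j * d)).val| ≤ Wmeasure s N :=
  le_csSup (Wmeasure_set_bddAbove s N) ⟨a, d, t, hd, ht, hlt, rfl⟩

theorem Wmeasure_nonneg (s : ℕ → ZMod 2) {N : ℕ} (hN : 1 ≤ N) : 0 ≤ Wmeasure s N :=
  (abs_nonneg _).trans <|
    abs_sum_le_Wmeasure s (a := 0) (d := 1) (t := 1) le_rfl le_rfl (by omega)

theorem le_Wmeasure_of_eq_zero (s : ℕ → ZMod 2) {N a d t : ℕ} (hd : 1 ≤ d) (ht : 1 ≤ t)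
    (hlt : a + (t - 1) * d < N) (hs : ∀ j < t, s (a + j * d) = 0) :
    (t : ℤ) ≤ Wmeasure s N := by
  have hsum : ∑ j ∈ range t, (-1 : ℤ) ^ (s (a + j * d)).val = t := by
    rw [sum_congr rfl fun j hj => by rw [hs j (mem_range.mp hj)]]
    simp
  simpa [hsum] using abs_sum_le_Wmeasure s hd ht hlt

theorem baum_sweet_well_distribution_general (b : ℕ → ZMod 2)
    (heven : ∀ k m : ℕ, ¬ (4 ∣ m) → m % 2 = 0 → b (4 ^ k * m) = 0) :
    ∀ N : ℕ, 1 ≤ N → (((N + 1) / 4 : ℕ) : ℤ) ≤ Wmeasure b N := by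
  intro N hN
  rcases Nat.eq_zero_or_pos ((N + 1) / 4) with hT | hT
  · simpa [hT] using Wmeasure_nonneg b hN
  · have hzero : ∀ j, b (2 + j * 4) = 0 := fun j => by
      simpa using heven 0 (2 + j * 4) (by omega) (by omega)
    exact le_Wmeasure_of_eq_zero b (a := 2) (by norm_num) hT (by omega) fun j _ => hzero j

/-- The Baum–Sweet sequence satisfies `W(b, N) ≥ ⌊(N+1)/4⌋` for all `N ≥ 1`. -/
theorem baum_sweet_well_distribution (b : ℕ → ZMod 2) (hb0 : b 0 = 1)
    (heven : ∀ k m : ℕ, ¬ (4 ∣ m) → m % 2 = 0 → b (4 ^ k * m) = 0)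
    (hodd : ∀ k m : ℕ, ¬ (4 ∣ m) → m % 2 = 1 → b (4 ^ k * m) = b ((m - 1) / 2)) :
    ∀ N : ℕ, 1 ≤ N → (((N + 1) / 4 : ℕ) : ℤ) ≤ Wmeasure b N :=
  baum_sweet_well_distribution_general b heven
end

section
/- Let (s_n) be a sequence over F_2 with generating function G(x) = ∑_{n≥0} s_n x^n (a formal power series over F_2) satisfying f_2(G(x)^{2^ℓ}) + x·f_1(G(x)²) + G(x) + f_0(x) = 0, where f_0, f_1, f_2 are polynomials over F_2, deg f_0 ≤ 2^ℓ − 3 and ℓ ≥ 2. Then s_{2^ℓ n + 2^ℓ − 2} = 0 for all n ≥ 0. -/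
/-!
Over `𝔽_p` the Frobenius fixes every coefficient, so `G ^ p ^ k` is `G` expanded by `x ↦ x ^ p ^ k`,
and any polynomial in it is supported on exponents divisible by `p ^ k`. At the exponent
`m = 2^ℓ n + 2^ℓ - 2` this kills `f₂(G^{2^ℓ})`, which lives on multiples of `2^ℓ`, and
`x f₁(G²)`, which lives on odd exponents; `f₀` has degree below `m`, so the functional equation
leaves `s_m = 0`.
-/

open Polynomial

namespace PowerSeries

variable {p : ℕ} [Fact p.Prime]

theorem pow_char_pow_eq_expand (φ : PowerSeries (ZMod p)) (k : ℕ) :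
    φ ^ p ^ k = expand (p ^ k) (pow_ne_zero k (Fact.out : p.Prime).ne_zero) φ := by
  have hfrob : iterateFrobenius (ZMod p) p k = RingHom.id (ZMod p) := RingHom.ext_zmod _ _
  rw [← MvPowerSeries.map_iterateFrobenius_expand p (Fact.out : p.Prime).ne_zero φ k, hfrob,
    MvPowerSeries.map_id]
  rfl

theorem coeff_aeval_pow_char_pow_of_not_dvd (φ : PowerSeries (ZMod p)) (f : (ZMod p)[X])
    {k m : ℕ} (hm : ¬ p ^ k ∣ m) : coeff m (Polynomial.aeval (φ ^ p ^ k) f) = 0 := by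
  rw [pow_char_pow_eq_expand, aeval_algHom_apply]
  exact coeff_expand_of_not_dvd _ _ _ hm

end PowerSeries

theorem Polynomial.aeval_powerSeries_X {R : Type*} [CommSemiring R] (f : R[X]) :
    aeval (PowerSeries.X : PowerSeries R) f = f := by
  rw [aeval_def, ← eval₂_C_X_eq_coe]
  rfl

/-- If the generating function `G = ∑ s_n x^n ∈ F₂[[x]]` satisfies
`f₂(G^{2^ℓ}) + x·f₁(G²) + G + f₀(x) = 0` with `deg f₀ ≤ 2^ℓ - 3` and `ℓ ≥ 2`,
then `s (2^ℓ n + 2^ℓ - 2) = 0` for all `n`. -/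
theorem coeff_vanishes_of_functional_equation (ℓ : ℕ) (hℓ : 2 ≤ ℓ) (s : ℕ → ZMod 2)
    (f₀ f₁ f₂ : Polynomial (ZMod 2)) (hdeg : f₀.natDegree ≤ 2 ^ ℓ - 3)
    (heq : Polynomial.aeval ((PowerSeries.mk s) ^ (2 ^ ℓ)) f₂
      + PowerSeries.X * Polynomial.aeval ((PowerSeries.mk s) ^ 2) f₁
      + PowerSeries.mk s
      + Polynomial.aeval (PowerSeries.X : PowerSeries (ZMod 2)) f₀ = 0) :
    ∀ n : ℕ, s (2 ^ ℓ * n + (2 ^ ℓ - 2)) = 0 := by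
  intro n
  have h4 : 4 ≤ 2 ^ ℓ := by simpa using Nat.pow_le_pow_right two_pos hℓ
  have h2 : 2 ∣ 2 ^ ℓ := dvd_pow_self 2 (by omega)
  obtain ⟨m, hm⟩ : ∃ m, m = 2 ^ ℓ * n + (2 ^ ℓ - 2) := ⟨_, rfl⟩
  obtain ⟨m', hm'⟩ : ∃ m', m = m' + 1 := ⟨m - 1, by omega⟩
  have hm_not_dvd : ¬ 2 ^ ℓ ∣ m := by
    rw [hm, Nat.dvd_add_right (dvd_mul_right _ n)]
    exact Nat.not_dvd_of_pos_of_lt (by omega) (by omega)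
  have hm'_odd : ¬ 2 ^ 1 ∣ m' := by
    have := dvd_mul_of_dvd_left h2 n
    omega
  have hf₂ := PowerSeries.coeff_aeval_pow_char_pow_of_not_dvd (PowerSeries.mk s) f₂ hm_not_dvd
  have hf₁ : PowerSeries.coeff m (PowerSeries.X * aeval (PowerSeries.mk s ^ 2) f₁) = 0 := by
    rw [hm', PowerSeries.coeff_succ_X_mul]
    exact PowerSeries.coeff_aeval_pow_char_pow_of_not_dvd _ f₁ hm'_odd
  have hf₀ : PowerSeries.coeff m (aeval (PowerSeries.X : PowerSeries (ZMod 2)) f₀) = 0 := by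
    rw [aeval_powerSeries_X, coeff_coe]
    exact coeff_eq_zero_of_natDegree_lt (by omega)
  rw [← hm]
  simpa [hf₂, hf₁, hf₀] using congrArg (PowerSeries.coeff m) heq
end

section
/- Let ℓ ≥ 1 and let (s_n) be a sequence over F_2 whose generating function G(x) satisfies f_1(x², G(x)²) + (x^{2^ℓ} + 1)·G(x) + f_0(x) = 0 with polynomials f_1 ∈ F_2[x,y], f_0 ∈ F_2[x], deg f_0 ≤ 2^ℓ − 2. Then s_{2^ℓ − 1} = 0 and s_{2^ℓ(n+1) + 2^ℓ − 1} = s_{2^ℓ n + 2^ℓ − 1} for all n ≥ 0; in particular s_{2^ℓ n + 2^ℓ − 1} = 0 for all n ≥ 0. -/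
/-! Over 𝔽₂ squaring is a ring endomorphism fixing the coefficients of `f₁`, so
`f₁(x², G²) = f₁(x, G)²` has only even-degree terms. At an odd degree `N > deg f₀` the
equation therefore reads `s (N - 2^ℓ) + s N = 0`. Since `ℓ ≥ 1`, every index `2^ℓ n + 2^ℓ - 1`
is odd, and the chain starts at `N = 2^ℓ - 1`, where the term `s (N - 2^ℓ)` is absent. -/

open PowerSeries

namespace PowerSeries

variable {R : Type*}

theorem coeff_pow_char_eq_zero_of_not_dvd [CommRing R] (p : ℕ) [ExpChar R p] (φ : R⟦X⟧)
    {n : ℕ} (hn : ¬p ∣ n) : coeff n (φ ^ p) = 0 := by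
  have hp := expChar_ne_zero R p
  have hφ : map (frobenius R p) (expand p hp φ) = φ ^ p := MvPowerSeries.map_frobenius_expand p hp
  rw [← hφ, coeff_map, coeff_expand_of_not_dvd p hp φ hn, map_zero]

theorem coeff_X_pow_add_one_mul [Semiring R] (k n : ℕ) (s : ℕ → R) :
    coeff n ((X ^ k + 1) * mk s) = (if k ≤ n then s (n - k) else 0) + s n := by
  simp [add_mul, coeff_X_pow_mul']

theorem coeff_aeval_X_eq_zero_of_natDegree_lt [CommSemiring R] (f : Polynomial R) {n : ℕ}
    (hn : f.natDegree < n) : coeff n (Polynomial.aeval (X : R⟦X⟧) f) = 0 := by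
  rw [Polynomial.aeval_def, algebraMap_eq, Polynomial.eval₂_C_X_eq_coe, Polynomial.coeff_coe,
    Polynomial.coeff_eq_zero_of_natDegree_lt hn]

end PowerSeries

theorem MvPolynomial.aeval_pow_char_zmod {σ A : Type*} (p : ℕ) [Fact p.Prime] [CommSemiring A]
    [Algebra (ZMod p) A] (v : σ → A) (f : MvPolynomial σ (ZMod p)) :
    aeval (fun i => v i ^ p) f = aeval v f ^ p := by
  rw [← map_pow, ← expand_zmod, expand, aeval_bind₁]
  simp

theorem coeff_odd_eq_of_functional_equation {m : ℕ} {s : ℕ → ZMod 2}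
    {f₁ : MvPolynomial (Fin 2) (ZMod 2)} {f₀ : Polynomial (ZMod 2)}
    (heq : MvPolynomial.aeval ![(X : (ZMod 2)⟦X⟧) ^ 2, mk s ^ 2] f₁
      + (X ^ m + 1) * mk s + Polynomial.aeval (X : (ZMod 2)⟦X⟧) f₀ = 0)
    {N : ℕ} (hN : Odd N) (hdeg : f₀.natDegree < N) :
    (if m ≤ N then s (N - m) else 0) = s N := by
  have hsq : ![(X : (ZMod 2)⟦X⟧) ^ 2, mk s ^ 2] = fun i => ![X, mk s] i ^ 2 := by
    ext1 i; fin_cases i <;> rfl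
  have hcoeff := congrArg (coeff N) heq
  rw [hsq, MvPolynomial.aeval_pow_char_zmod, map_add, map_add,
    coeff_pow_char_eq_zero_of_not_dvd 2 _ hN.not_two_dvd_nat, coeff_X_pow_add_one_mul,
    coeff_aeval_X_eq_zero_of_natDegree_lt f₀ hdeg, zero_add, add_zero, map_zero] at hcoeff
  exact CharTwo.add_eq_zero.mp hcoeff

/-- If `G = ∑ s_n x^n ∈ F₂[[x]]` satisfies `f₁(x², G²) + (x^{2^ℓ}+1)G + f₀(x) = 0`
with `deg f₀ ≤ 2^ℓ - 2` and `ℓ ≥ 1`, then `s (2^ℓ - 1) = 0`, the subsequence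
`s (2^ℓ n + 2^ℓ - 1)` is constant in `n`, and in particular it vanishes. -/
theorem coeff_vanishes_of_functional_equation' (ℓ : ℕ) (hℓ : 1 ≤ ℓ) (s : ℕ → ZMod 2)
    (f₁ : MvPolynomial (Fin 2) (ZMod 2)) (f₀ : Polynomial (ZMod 2))
    (hdeg : f₀.natDegree ≤ 2 ^ ℓ - 2)
    (heq : MvPolynomial.aeval
        ![(PowerSeries.X : PowerSeries (ZMod 2)) ^ 2, (PowerSeries.mk s) ^ 2] f₁
      + ((PowerSeries.X : PowerSeries (ZMod 2)) ^ (2 ^ ℓ) + 1) * PowerSeries.mk s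
      + Polynomial.aeval (PowerSeries.X : PowerSeries (ZMod 2)) f₀ = 0) :
    s (2 ^ ℓ - 1) = 0 ∧
    (∀ n : ℕ, s (2 ^ ℓ * (n + 1) + (2 ^ ℓ - 1)) = s (2 ^ ℓ * n + (2 ^ ℓ - 1))) ∧
    (∀ n : ℕ, s (2 ^ ℓ * n + (2 ^ ℓ - 1)) = 0) := by
  have hm : Even (2 ^ ℓ) := (Nat.even_pow' (by omega)).mpr even_two
  have hm2 : 2 ≤ 2 ^ ℓ := Nat.le_self_pow (by omega) 2
  have key (n : ℕ) := coeff_odd_eq_of_functional_equation heq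
    ((hm.mul_right n).add_odd (Nat.Even.sub_odd (by omega) hm odd_one))
    ((hdeg.trans_lt (by omega)).trans_le (Nat.le_add_left _ (2 ^ ℓ * n)))
  have h0 : s (2 ^ ℓ - 1) = 0 := by
    simpa [if_neg (show ¬2 ^ ℓ ≤ 2 ^ ℓ - 1 by omega)] using (key 0).symm
  have hstep (n : ℕ) :
      s (2 ^ ℓ * (n + 1) + (2 ^ ℓ - 1)) = s (2 ^ ℓ * n + (2 ^ ℓ - 1)) := by
    rw [← key (n + 1), mul_add_one, if_pos (by omega), add_right_comm, Nat.add_sub_cancel]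
  exact ⟨h0, hstep, fun n => Nat.rec (by simpa using h0) (fun n ih => (hstep n).trans ih) n⟩
end

section
/- Let (s_n) be a sequence over F_2 with generating function G(x) satisfying (x+1)^{2^ℓ}((a_1 x + a_0)G(x)² + G(x)) + f(x) = 0, where ℓ ≥ 0, deg f ≤ 2^ℓ − 1, and (a_1, a_0) ≠ (0,0). Then for every k ≥ 0 and every n ≥ 0: s_{2n} + s_{2n + 2^{k+ℓ}} = a_0 (s_n + s_{n + 2^{k+ℓ−1}}) and s_{2n+1} + s_{2n + 2^{k+ℓ} + 1} = a_1 (s_n + s_{n + 2^{k+ℓ−1}}) (identities in F_2), where for k+ℓ ≥ 1 the index 2^{k+ℓ−1} is the usual power, obtained by comparing coefficients of (x+1)^{2^{k+ℓ}−2^ℓ}·[the functional equation] at x^{2n+2^{k+ℓ}} and x^{2n+2^{k+ℓ}+1}. -/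
/-!
Multiplying the functional equation by `(x + 1)^(2^(k+ℓ) - 2^ℓ)` and using the Frobenius
`(x + 1)^(2^(k+ℓ)) = x^(2^(k+ℓ)) + 1` gives `(x^(2^(k+ℓ)) + 1) H = q` with `deg q < 2^(k+ℓ)`,
where `H = (a₁x + a₀)G² + G`; hence the coefficients of `H` are `2^(k+ℓ)`-periodic.
Over `F₂` we have `G² = ∑ sₙ x^(2n)`, so the coefficients of `H` at `2n` and `2n + 1` are
`a₀sₙ + s₂ₙ` and `a₁sₙ + s₂ₙ₊₁`, and periodicity at these indices is the claim.
-/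
namespace PowerSeries
variable {R : Type*} [CommRing R]

section ExpChar
variable (p : ℕ) [ExpChar R p]

theorem map_frobenius_expand (φ : R⟦X⟧) :
    map (frobenius R p) (expand p (expChar_ne_zero R p) φ) = φ ^ p :=
  MvPowerSeries.map_frobenius_expand p _

theorem coeff_pow_expChar (φ : R⟦X⟧) (n : ℕ) :
    coeff n (φ ^ p) = if p ∣ n then coeff (n / p) φ ^ p else 0 := by
  rw [← map_frobenius_expand, coeff_map, coeff_expand]
  split_ifs
  exacts [rfl, map_zero _]

theorem X_add_one_pow_expChar_pow (n : ℕ) : (X + 1 : R⟦X⟧) ^ p ^ n = X ^ p ^ n + 1 := by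
  rw [← MvPowerSeries.map_iterateFrobenius_expand p (expChar_ne_zero R p)]
  change map _ (expand _ _ (X + 1)) = _
  simp

end ExpChar

theorem aeval_X_eq_coe (f : Polynomial R) : Polynomial.aeval (X : R⟦X⟧) f = f :=
  Polynomial.eval₂_C_X_eq_coe

theorem coeff_add_coeff_add_eq_zero_of_X_pow_add_one_mul_add_eq_zero {H : R⟦X⟧}
    {q : Polynomial R} {N : ℕ} (h : (X ^ N + 1) * H + (q : R⟦X⟧) = 0)
    (hq : q.natDegree < N) (j : ℕ) : coeff j H + coeff (j + N) H = 0 := by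
  have := congrArg (coeff (j + N)) h
  rwa [add_mul, one_mul, map_add, map_add, coeff_X_pow_mul, Polynomial.coeff_coe,
    Polynomial.coeff_eq_zero_of_natDegree_lt (by omega), add_zero, map_zero] at this

theorem coeff_add_coeff_add_expChar_pow_eq_zero (p : ℕ) [ExpChar R p] {H : R⟦X⟧}
    {f : Polynomial R} {d e : ℕ} (h : (X + 1) ^ p ^ d * H + (f : R⟦X⟧) = 0)
    (hf : f.natDegree < p ^ d) (hde : d ≤ e) (j : ℕ) : coeff j H + coeff (j + p ^ e) H = 0 := by
  have hpow : p ^ d ≤ p ^ e := Nat.pow_le_pow_right (expChar_pos R p) hde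
  refine coeff_add_coeff_add_eq_zero_of_X_pow_add_one_mul_add_eq_zero
    (q := (Polynomial.X + 1) ^ (p ^ e - p ^ d) * f) ?_ ?_ j
  · rw [← X_add_one_pow_expChar_pow, ← Nat.sub_add_cancel hpow, pow_add]
    push_cast
    rw [Nat.add_sub_cancel, mul_assoc, ← mul_add, h, mul_zero]
  · have hX : (Polynomial.X + 1 : Polynomial R).natDegree ≤ 1 :=
      (Polynomial.natDegree_add_le _ _).trans (by simp [Polynomial.natDegree_X_le])
    have := Polynomial.natDegree_mul_le_of_le
      (Polynomial.natDegree_pow_le_of_le (p ^ e - p ^ d) hX) le_rfl (q := f)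
    omega

section CharTwo
variable [ExpChar R 2] (a b : R) (φ : R⟦X⟧) (n : ℕ)

theorem coeff_two_mul_linear_mul_sq :
    coeff (2 * n) ((C b * X + C a) * φ ^ 2) = a * coeff n φ ^ 2 := by
  have hX : coeff (2 * n) (X * φ ^ 2) = 0 := by
    rcases n with _ | n
    · exact coeff_zero_X_mul _
    · rw [show 2 * (n + 1) = 2 * n + 1 + 1 by ring, coeff_succ_X_mul, coeff_pow_expChar,
        if_neg (by omega)]
  rw [add_mul, map_add, mul_assoc, coeff_C_mul, coeff_C_mul, hX, mul_zero, zero_add,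
    coeff_pow_expChar, if_pos (dvd_mul_right 2 n), Nat.mul_div_cancel_left n two_pos]

theorem coeff_two_mul_add_one_linear_mul_sq :
    coeff (2 * n + 1) ((C b * X + C a) * φ ^ 2) = b * coeff n φ ^ 2 := by
  rw [add_mul, map_add, mul_assoc, coeff_C_mul, coeff_C_mul, coeff_succ_X_mul,
    coeff_pow_expChar, coeff_pow_expChar, if_pos (dvd_mul_right 2 n), if_neg (by omega),
    Nat.mul_div_cancel_left n two_pos, mul_zero, add_zero]

end CharTwo

end PowerSeries

open PowerSeries in
theorem correlation_identities_of_functional_equation_general (ℓ : ℕ) (s : ℕ → ZMod 2)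
    (a₀ a₁ : ZMod 2) (f : Polynomial (ZMod 2))
    (hdeg : f.natDegree ≤ 2 ^ ℓ - 1)
    (heq : ((PowerSeries.X : PowerSeries (ZMod 2)) + 1) ^ (2 ^ ℓ) *
        ((PowerSeries.C a₁ * PowerSeries.X + PowerSeries.C a₀) *
          (PowerSeries.mk s) ^ 2 + PowerSeries.mk s)
      + Polynomial.aeval (PowerSeries.X : PowerSeries (ZMod 2)) f = 0) :
    ∀ k n : ℕ, 1 ≤ k + ℓ →
      s (2 * n) + s (2 * n + 2 ^ (k + ℓ)) = a₀ * (s n + s (n + 2 ^ (k + ℓ - 1))) ∧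
      s (2 * n + 1) + s (2 * n + 2 ^ (k + ℓ) + 1) = a₁ * (s n + s (n + 2 ^ (k + ℓ - 1))) := by
  intro k n hk
  rw [aeval_X_eq_coe] at heq
  have hperiod := coeff_add_coeff_add_expChar_pow_eq_zero 2 heq
    (by have := Nat.one_le_two_pow (n := ℓ); omega) (Nat.le_add_left ℓ k)
  set m := n + 2 ^ (k + ℓ - 1)
  have hm : 2 * n + 2 ^ (k + ℓ) = 2 * m := by
    rw [Nat.mul_add, ← pow_succ', Nat.sub_add_cancel hk]
  have hsq (i : ℕ) : s i ^ 2 = s i := ZMod.pow_card (s i)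
  constructor
  · have h := hperiod (2 * n)
    rw [hm] at h ⊢
    simp only [map_add, coeff_two_mul_linear_mul_sq, coeff_mk, hsq] at h
    grind
  · have h := hperiod (2 * n + 1)
    rw [show 2 * n + 1 + 2 ^ (k + ℓ) = 2 * m + 1 by omega] at h
    rw [hm]
    simp only [map_add, coeff_two_mul_add_one_linear_mul_sq, coeff_mk, hsq] at h
    grind

/-- If `G = ∑ s_n x^n ∈ F₂[[x]]` satisfies
`(x+1)^{2^ℓ}((a₁x+a₀)G² + G) + f(x) = 0` with `deg f ≤ 2^ℓ - 1` and
`(a₁,a₀) ≠ (0,0)`, then for all `k, n` with `k + ℓ ≥ 1` we have the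
`F₂`-identities `s_{2n} + s_{2n+2^{k+ℓ}} = a₀(s_n + s_{n+2^{k+ℓ-1}})` and
`s_{2n+1} + s_{2n+2^{k+ℓ}+1} = a₁(s_n + s_{n+2^{k+ℓ-1}})`. -/
theorem correlation_identities_of_functional_equation (ℓ : ℕ) (s : ℕ → ZMod 2)
    (a₀ a₁ : ZMod 2) (ha : ¬(a₁ = 0 ∧ a₀ = 0)) (f : Polynomial (ZMod 2))
    (hdeg : f.natDegree ≤ 2 ^ ℓ - 1)
    (heq : ((PowerSeries.X : PowerSeries (ZMod 2)) + 1) ^ (2 ^ ℓ) *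
        ((PowerSeries.C a₁ * PowerSeries.X + PowerSeries.C a₀) *
          (PowerSeries.mk s) ^ 2 + PowerSeries.mk s)
      + Polynomial.aeval (PowerSeries.X : PowerSeries (ZMod 2)) f = 0) :
    ∀ k n : ℕ, 1 ≤ k + ℓ →
      s (2 * n) + s (2 * n + 2 ^ (k + ℓ)) = a₀ * (s n + s (n + 2 ^ (k + ℓ - 1))) ∧
      s (2 * n + 1) + s (2 * n + 2 ^ (k + ℓ) + 1) = a₁ * (s n + s (n + 2 ^ (k + ℓ - 1))) :=
  correlation_identities_of_functional_equation_general ℓ s a₀ a₁ f hdeg heq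
end

section
/- Let (s_n) be a binary sequence whose generating function G(x) over F_2 satisfies (x+1)^{2^ℓ}((a_1 x + a_0)G(x)² + G(x)) + f(x) = 0 with ℓ ≥ 0, deg f ≤ 2^ℓ − 1, (a_1,a_0) ≠ (0,0). Then the Nth correlation measure of order 2 satisfies C_2(s_n, N) > N/(2^ℓ + 2) − 2 for all N ≥ 2^{ℓ+1} + 4. -/
/-!
Over `F₂` we have `(x + 1)^{2^ℓ} = x^{2^ℓ} + 1` and `G(x)² = G(x²)`, so comparing the
coefficients of `x^{n + 2^ℓ}` (which `f` does not reach) shows that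
`h_n = c_n s_{⌊n/2⌋} + s_n` is `2^ℓ`-periodic, where `c_n` is `a₀` for even and `a₁` for
odd `n`.

If `a₀ ≠ a₁`, periodicity of `h` transfers to `s` at the indices where `c_n = 0` and then,
through `s_{⌊n/2⌋}`, to the indices where `c_{⌊n/2⌋} = 0`: so `s_{n + 2^{ℓ+1}} = s_n` off a
single residue class mod 4, and the correlation at lag `2^{ℓ+1}` is at least about half its
length. If `a₀ = a₁ = 1`, induction on `j` shows that `s_n + s_{n + 2^{j+ℓ-1}}` is the same
for all `n < 2^j`, which gives a window of length `2^j ≈ N/(2^ℓ + 2)` with perfect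
correlation. For `ℓ = 0` the sequence is constant from `n = 1` on when `a₀ = 1`, and
`4`-periodic off the class `3 mod 4` when `a₀ = 0`.
-/

open PowerSeries Function

/-- The `N`th correlation measure of order 2 of a binary sequence:
`C₂(s,N) = max |∑_{n<M} (-1)^{s_{n+d₁}+s_{n+d₂}}|` over `M` and lags
`0 ≤ d₁ < d₂` with `d₂ + M < N`. -/
noncomputable def C2 (s : ℕ → ZMod 2) (N : ℕ) : ℤ :=
  sSup {x : ℤ | ∃ M d₁ d₂ : ℕ, d₁ < d₂ ∧ d₂ + M < N ∧
    x = |∑ n ∈ Finset.range M, (-1 : ℤ) ^ ((s (n + d₁)).val + (s (n + d₂)).val)|}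

lemma sq_eq_expand_two (φ : (ZMod 2)⟦X⟧) : φ ^ 2 = expand 2 two_ne_zero φ := by
  rw [← MvPowerSeries.map_frobenius_expand (p := 2) two_ne_zero, ZMod.frobenius_zmod,
    MvPowerSeries.map_id]
  rfl

lemma periodic_coeff_of_X_add_one_pow_mul_add_eq_zero {R : Type*} [CommRing R] [CharP R 2]
    {ℓ : ℕ} {H : R⟦X⟧} {f : Polynomial R} (hf : f.natDegree < 2 ^ ℓ)
    (h : (X + 1) ^ 2 ^ ℓ * H + Polynomial.aeval X f = 0) :
    Periodic (fun n ↦ coeff n H) (2 ^ ℓ) := by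
  have : CharP R⟦X⟧ 2 := charP_of_injective_ringHom C_injective 2
  intro n
  have hn := congrArg (coeff (n + 2 ^ ℓ)) h
  rw [Polynomial.aeval_def, algebraMap_eq, Polynomial.eval₂_C_X_eq_coe, add_pow_char_pow,
    one_pow, add_mul, one_mul, map_add, map_add, coeff_X_pow_mul, Polynomial.coeff_coe,
    Polynomial.coeff_eq_zero_of_natDegree_lt (by omega), add_zero, map_zero,
    CharTwo.add_eq_zero] at hn
  exact hn.symm

def quadCoeff (a₀ a₁ : ZMod 2) (s : ℕ → ZMod 2) (n : ℕ) : ZMod 2 :=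
  (if Even n then a₀ else a₁) * s (n / 2) + s n

lemma coeff_quadratic (a₀ a₁ : ZMod 2) (s : ℕ → ZMod 2) (n : ℕ) :
    coeff n ((C a₁ * X + C a₀) * PowerSeries.mk s ^ 2 + PowerSeries.mk s) =
      quadCoeff a₀ a₁ s n := by
  rw [sq_eq_expand_two, quadCoeff, add_mul, map_add, map_add, mul_assoc, coeff_C_mul,
    coeff_C_mul, coeff_mk]
  rcases n.even_or_odd' with ⟨k, rfl | rfl⟩
  · rcases k with _ | k
    · simp
    · rw [show 2 * (k + 1) = (2 * k + 1) + 1 by ring, coeff_succ_X_mul, coeff_expand,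
        coeff_expand]
      simp [Nat.dvd_add_right, Nat.even_add_one]
  · rw [coeff_succ_X_mul, coeff_expand, coeff_expand, show (2 * k + 1) / 2 = k by omega]
    simp [Nat.dvd_add_right]

def corr (s : ℕ → ZMod 2) (M d₁ d₂ : ℕ) : ℤ :=
  ∑ n ∈ Finset.range M, (-1 : ℤ) ^ ((s (n + d₁)).val + (s (n + d₂)).val)

lemma neg_one_pow_val_add_val (a b : ZMod 2) :
    (-1 : ℤ) ^ (a.val + b.val) = (-1) ^ (a + b).val := by
  revert a b; decide

section Correlation

variable {s : ℕ → ZMod 2} {N M : ℕ}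

lemma abs_corr_le (d₁ d₂ : ℕ) : |corr s M d₁ d₂| ≤ M :=
  (Finset.abs_sum_le_sum_abs _ _).trans (by simp)

lemma abs_corr_le_C2 {d₁ d₂ : ℕ} (h₁ : d₁ < d₂) (h₂ : d₂ + M < N) :
    |corr s M d₁ d₂| ≤ C2 s N := by
  refine le_csSup ⟨N, ?_⟩ ⟨M, d₁, d₂, h₁, h₂, rfl⟩
  rintro _ ⟨M', d₁', d₂', -, h₂', rfl⟩
  exact (abs_corr_le (M := M') d₁' d₂').trans (by omega)

lemma C2_ge_of_add_eq_const {d₁ d₂ : ℕ} (h₁ : d₁ < d₂) (h₂ : d₂ + M < N) {c : ZMod 2}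
    (h : ∀ n < M, s (n + d₁) + s (n + d₂) = c) : (M : ℤ) ≤ C2 s N := by
  refine le_of_eq_of_le ?_ (abs_corr_le_C2 h₁ h₂)
  rw [corr, Finset.sum_congr rfl fun n hn ↦ by
    rw [neg_one_pow_val_add_val, h n (Finset.mem_range.mp hn)]]
  simp

lemma C2_ge_sub_count {L : ℕ} (hL : 0 < L) (h₂ : L + M < N) (p : ℕ → Prop) [DecidablePred p]
    (h : ∀ n, ¬ p n → s (n + L) = s n) : (M : ℤ) - 2 * Nat.count p M ≤ C2 s N := by
  have hterm (n : ℕ) :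
      1 - 2 * (if p n then 1 else 0) ≤ (-1 : ℤ) ^ ((s (n + 0)).val + (s (n + L)).val) := by
    rw [neg_one_pow_val_add_val]
    split_ifs with hp
    · rcases neg_one_pow_eq_or ℤ (s (n + 0) + s (n + L)).val with h | h <;> rw [h] <;>
        norm_num
    · simp [h n hp, CharTwo.add_self_eq_zero]
  calc (M : ℤ) - 2 * Nat.count p M
        = ∑ n ∈ Finset.range M, (1 - 2 * (if p n then 1 else 0)) := by
        rw [Finset.sum_sub_distrib, ← Finset.mul_sum, Finset.sum_boole,
          Nat.count_eq_card_filter_range]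
        simp
    _ ≤ corr s M 0 L := Finset.sum_le_sum fun n _ ↦ hterm n
    _ ≤ C2 s N := (le_abs_self _).trans (abs_corr_le_C2 hL h₂)

end Correlation

section Recurrences

variable {a₀ a₁ : ZMod 2} {s : ℕ → ZMod 2} {T : ℕ}

lemma add_eq_of_periodic_of_coeff_eq_zero (hper : Periodic (quadCoeff a₀ a₁ s) T) (hT : Even T)
    {n : ℕ} (hn : (if Even n then a₀ else a₁) = 0) : s (n + T) = s n := by
  have h := hper n
  simp only [quadCoeff, Nat.even_add, hT, iff_true, hn, zero_mul, zero_add] at h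
  exact h

lemma add_two_mul_eq_of_periodic (hper : Periodic (quadCoeff a₀ a₁ s) T) (hT : Even T) {n : ℕ}
    (hn : (if Even n then a₀ else a₁) = 0 ∨ (if Even (n / 2) then a₀ else a₁) = 0) :
    s (n + 2 * T) = s n := by
  rcases hn with hn | hn
  · have hnT : (if Even (n + T) then a₀ else a₁) = 0 := by simpa [Nat.even_add, hT] using hn
    rw [two_mul, ← add_assoc, add_eq_of_periodic_of_coeff_eq_zero hper hT hnT,
      add_eq_of_periodic_of_coeff_eq_zero hper hT hn]
  · have h := hper.nat_mul 2 n
    simp only [quadCoeff, Nat.cast_ofNat, Nat.even_add, even_two_mul, iff_true,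
      show (n + 2 * T) / 2 = n / 2 + T by omega,
      add_eq_of_periodic_of_coeff_eq_zero hper hT hn] at h
    exact add_left_cancel h

lemma eq_one_of_periodic_one (hper : Periodic (quadCoeff 1 a₁ s) 1) {n : ℕ} (hn : 1 ≤ n) :
    s n = s 1 := by
  have hrec (m : ℕ) : s m = (if Even m then 1 else a₁) * s (m / 2) := by
    have h := hper.nat_mul_eq m
    simp only [Nat.cast_id, mul_one, quadCoeff] at h
    simpa [CharTwo.add_self_eq_zero, CharTwo.add_eq_zero, eq_comm] using h
  induction n using Nat.strong_induction_on with
  | _ n ih =>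
    obtain rfl | hn := hn.eq_or_lt
    · rfl
    rw [hrec n, ih (n / 2) (by omega) (by omega)]
    split_ifs
    · exact one_mul _
    · have h1 : s 1 = a₁ * s 0 := by simpa using hrec 1
      rw [h1, ← mul_assoc, ← sq, ZMod.pow_card]

lemma add_pow_two_mul_eq_of_periodic {D : ℕ} (hper : Periodic (quadCoeff 1 1 s) (2 * D)) :
    ∀ j n, n < 2 ^ j → s (n + 2 ^ j * D) + s n = s D + s 0 := by
  intro j
  induction j with
  | zero =>
    intro n hn
    obtain rfl : n = 0 := by omega
    simp [add_comm]
  | succ j ih =>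
    intro n hn
    have h := hper.nat_mul (2 ^ j) n
    simp only [quadCoeff, ite_self, one_mul, Nat.cast_pow, Nat.cast_ofNat,
      show 2 ^ j * (2 * D) = 2 * (2 ^ j * D) by ring,
      show (n + 2 * (2 ^ j * D)) / 2 = n / 2 + 2 ^ j * D by omega] at h
    have ih' := ih (n / 2) (by rw [pow_succ] at hn; omega)
    rw [show 2 ^ (j + 1) * D = 2 * (2 ^ j * D) by ring]
    grind

lemma C2_ge_of_periodic_of_not_modEq (hper : Periodic (quadCoeff a₀ a₁ s) T) (hT : Even T)
    (hT₀ : 0 < T) {r M N : ℕ}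
    (hr : ∀ n, ¬ n ≡ r [MOD 4] →
      (if Even n then a₀ else a₁) = 0 ∨ (if Even (n / 2) then a₀ else a₁) = 0)
    (hN : 2 * T + M < N) :
    (M : ℤ) - 2 * (M / 4 + if r % 4 < M % 4 then 1 else 0 : ℕ) ≤ C2 s N := by
  rw [← Nat.count_modEq_card _ (by norm_num)]
  exact C2_ge_sub_count (by omega) hN _ fun n hn ↦ add_two_mul_eq_of_periodic hper hT (hr n hn)

end Recurrences

lemma ZMod.two_eq_zero_or_one (a : ZMod 2) : a = 0 ∨ a = 1 := by
  revert a; decide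

lemma ite_even_zero_one_eq_zero_or {n : ℕ} (hn : ¬ n ≡ 3 [MOD 4]) :
    (if Even n then (0 : ZMod 2) else 1) = 0 ∨
      (if Even (n / 2) then (0 : ZMod 2) else 1) = 0 := by
  simp only [Nat.ModEq, Nat.even_iff] at hn ⊢
  split_ifs <;> simp
  omega

lemma ite_even_one_zero_eq_zero_or {n : ℕ} (hn : ¬ n ≡ 0 [MOD 4]) :
    (if Even n then (1 : ZMod 2) else 0) = 0 ∨
      (if Even (n / 2) then (1 : ZMod 2) else 0) = 0 := by
  simp only [Nat.ModEq, Nat.even_iff] at hn ⊢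
  split_ifs <;> simp
  omega

section Bounds

variable {a₀ a₁ : ZMod 2} {s : ℕ → ZMod 2} {T N : ℕ}

lemma lt_C2_of_periodic_one (ha : ¬(a₁ = 0 ∧ a₀ = 0)) (hper : Periodic (quadCoeff a₀ a₁ s) 1)
    (hN : 6 ≤ N) : (N : ℤ) < (C2 s N + 2) * 3 := by
  obtain rfl | rfl := ZMod.two_eq_zero_or_one a₀
  · obtain rfl : a₁ = 1 := (ZMod.two_eq_zero_or_one a₁).resolve_left fun h ↦ ha ⟨h, rfl⟩
    have hC := C2_ge_of_periodic_of_not_modEq (M := N - 5) (N := N)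
      (by simpa using hper.nat_mul 2) (by decide) (by norm_num)
      (fun n hn ↦ ite_even_zero_one_eq_zero_or hn) (by omega)
    split_ifs at hC <;> omega
  · have hs {n : ℕ} (hn : 1 ≤ n) : s n = s 1 := eq_one_of_periodic_one hper hn
    have hC := C2_ge_of_add_eq_const (s := s) (N := N) (d₁ := 1) (d₂ := 2) (M := N - 3)
      (c := 0) (by norm_num) (by omega) fun n _ ↦ by
        rw [hs (n := n + 1) (by omega), hs (n := n + 2) (by omega), CharTwo.add_self_eq_zero]
    omega

lemma lt_C2_of_periodic_of_ne (hne : a₀ ≠ a₁) (hper : Periodic (quadCoeff a₀ a₁ s) T)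
    (hT : Even T) (hT₂ : 2 ≤ T) (hN : 2 * T + 4 ≤ N) :
    (N : ℤ) < (C2 s N + 2) * (T + 2) := by
  obtain ⟨r, hr⟩ : ∃ r, ∀ n, ¬ n ≡ r [MOD 4] →
      (if Even n then a₀ else a₁) = 0 ∨ (if Even (n / 2) then a₀ else a₁) = 0 := by
    obtain rfl | rfl := ZMod.two_eq_zero_or_one a₀ <;>
      obtain rfl | rfl := ZMod.two_eq_zero_or_one a₁ <;> simp at hne
    exacts [⟨3, fun _ ↦ ite_even_zero_one_eq_zero_or⟩, ⟨0, fun _ ↦ ite_even_one_zero_eq_zero_or⟩]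
  have hC := C2_ge_of_periodic_of_not_modEq (M := N - 1 - 2 * T) (N := N) hper hT (by omega) hr
    (by omega)
  have hbound : 1 ≤ C2 s N ∧ (N : ℤ) - 2 * T - 4 ≤ 2 * C2 s N := by
    split_ifs at hC <;> omega
  nlinarith [mul_le_mul hbound.1 (show (2 : ℤ) ≤ T by exact_mod_cast hT₂) (by norm_num) (by omega)]

lemma lt_C2_of_periodic_one_one (hper : Periodic (quadCoeff 1 1 s) T) (hT : Even T)
    (hT₀ : 0 < T) (hN : 2 * T + 4 ≤ N) : (N : ℤ) < (C2 s N + 2) * (T + 2) := by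
  obtain ⟨D, rfl⟩ := hT
  rw [← two_mul] at hper
  set k := Nat.log 2 ((N - 1) / (2 * D + 2))
  have hk : 2 ^ k * (2 * D + 2) ≤ N - 1 :=
    (Nat.le_div_iff_mul_le (by omega)).mp (Nat.pow_log_le_self 2 (by
      rw [ne_eq, Nat.div_eq_zero_iff]; omega))
  have hk' : N - 1 < 2 ^ (k + 1) * (2 * D + 2) :=
    (Nat.div_lt_iff_lt_mul (by omega)).mp (Nat.lt_pow_succ_log_self (by norm_num) _)
  have hwindow : 2 ^ (k + 1) * D + 2 ^ (k + 1) < N := by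
    have : 2 ^ (k + 1) * D + 2 ^ (k + 1) = 2 ^ k * (2 * D + 2) := by ring
    omega
  have hC := C2_ge_of_add_eq_const (d₁ := 0) (M := 2 ^ (k + 1))
    (Nat.mul_pos (by positivity) (by omega)) hwindow fun n hn ↦ by
      rw [add_zero, add_comm]; exact add_pow_two_mul_eq_of_periodic hper _ _ hn
  have hN' : (N : ℤ) ≤ 2 ^ (k + 1) * (2 * D + 2) := by exact_mod_cast (show N ≤ _ by omega)
  push_cast at hC ⊢
  nlinarith [mul_le_mul_of_nonneg_right hC (by positivity : (0 : ℤ) ≤ 2 * D + 2)]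

end Bounds

/-- If `G = ∑ s_n x^n ∈ F₂[[x]]` satisfies `(x+1)^{2^ℓ}((a₁x+a₀)G² + G) + f(x) = 0`
with `deg f ≤ 2^ℓ - 1` and `(a₁,a₀) ≠ (0,0)`, then
`C₂(s,N) > N/(2^ℓ+2) - 2` for `N ≥ 2^{ℓ+1} + 4`. -/
theorem correlation_of_functional_equation (ℓ : ℕ) (s : ℕ → ZMod 2)
    (a₀ a₁ : ZMod 2) (ha : ¬(a₁ = 0 ∧ a₀ = 0)) (f : Polynomial (ZMod 2))
    (hdeg : f.natDegree ≤ 2 ^ ℓ - 1)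
    (heq : ((PowerSeries.X : PowerSeries (ZMod 2)) + 1) ^ (2 ^ ℓ) *
        ((PowerSeries.C a₁ * PowerSeries.X + PowerSeries.C a₀) *
          (PowerSeries.mk s) ^ 2 + PowerSeries.mk s)
      + Polynomial.aeval (PowerSeries.X : PowerSeries (ZMod 2)) f = 0) :
    ∀ N : ℕ, 2 ^ (ℓ + 1) + 4 ≤ N →
      (N : ℚ) / (2 ^ ℓ + 2) - 2 < (C2 s N : ℚ) := by
  intro N hN
  have hper : Periodic (quadCoeff a₀ a₁ s) (2 ^ ℓ) := by
    simpa only [coeff_quadratic] using periodic_coeff_of_X_add_one_pow_mul_add_eq_zero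
      (by have := Nat.one_le_two_pow (n := ℓ); omega) heq
  suffices (N : ℤ) < (C2 s N + 2) * (2 ^ ℓ + 2) by
    rw [sub_lt_iff_lt_add, div_lt_iff₀ (by positivity)]
    exact_mod_cast this
  rcases ℓ with _ | ℓ
  · simpa using lt_C2_of_periodic_one ha (by simpa using hper) (by simpa using hN)
  have hT : Even (2 ^ (ℓ + 1)) := (Nat.even_pow' (by omega)).mpr even_two
  have hN' : 2 * 2 ^ (ℓ + 1) + 4 ≤ N := by rwa [pow_succ 2 (ℓ + 1), mul_comm] at hN
  by_cases hne : a₀ = a₁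
  · obtain ⟨rfl, rfl⟩ : a₀ = 1 ∧ a₁ = 1 := by
      subst hne; simpa using (ZMod.two_eq_zero_or_one a₀).resolve_left (by simpa using ha)
    exact_mod_cast lt_C2_of_periodic_one_one hper hT (by positivity) hN'
  · exact_mod_cast lt_C2_of_periodic_of_ne hne hper hT (Nat.le_self_pow (by omega) 2) hN'
end

section
/- Let 1 ≤ a < 2^ℓ and let (r_n) be the binary pattern sequence defined by r_0 = 0 and r_n = r_{⌊n/2⌋} + 1 if n ≡ a (mod 2^ℓ), r_n = r_{⌊n/2⌋} otherwise (addition in F_2). Then C_2(r_n, N) > N/(2^ℓ + 2) − 2 for all N ≥ 2^{ℓ+1} + 4. -/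
/-!
Let `B = 2^(ℓ-1)` and `n < 2^K`. Following the recursion `m ↦ m / 2` from `n + 2^K B`, the part
`2^j B` (`j ≥ 1`) is a multiple of `2^ℓ`, so it changes neither the residue mod `2^ℓ` nor, since
`a ≠ 0`, the pattern count; hence `r (n + 2^K B) = r n + r (2^K B)`. The correlation with lags
`0 < 2^K B` over `2^K` terms is then `±2^K`, and taking `K` maximal with `2^K (B + 1) < N` gives
`N ≤ 2^(K+1) (B + 1) = 2^K (2^ℓ + 2)`.
-/

open Finset

def corrSum (s : ℕ → ZMod 2) (M d₁ d₂ : ℕ) : ℤ :=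
  ∑ n ∈ range M, (-1 : ℤ) ^ ((s (n + d₁)).val + (s (n + d₂)).val)

theorem abs_corrSum_le (s : ℕ → ZMod 2) (M d₁ d₂ : ℕ) : |corrSum s M d₁ d₂| ≤ M := by
  calc |corrSum s M d₁ d₂|
      ≤ ∑ n ∈ range M, |(-1 : ℤ) ^ ((s (n + d₁)).val + (s (n + d₂)).val)| :=
        abs_sum_le_sum_abs _ _
    _ = M := by simp

theorem abs_corrSum_le_C2 (s : ℕ → ZMod 2) {M d₁ d₂ N : ℕ} (hd : d₁ < d₂) (hN : d₂ + M < N) :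
    |corrSum s M d₁ d₂| ≤ C2 s N := by
  refine le_csSup ⟨N, ?_⟩ ⟨M, d₁, d₂, hd, hN, rfl⟩
  rintro _ ⟨M', d₁', d₂', -, hN', rfl⟩
  exact (abs_corrSum_le s M' d₁' d₂').trans (by exact_mod_cast (by omega : M' ≤ N))

theorem corrSum_eq_of_forall_add {s : ℕ → ZMod 2} {M d₁ d₂ : ℕ} {c : ZMod 2}
    (h : ∀ n < M, s (n + d₂) = s (n + d₁) + c) : corrSum s M d₁ d₂ = M * (-1 : ℤ) ^ c.val := by
  have hterm : ∀ x y : ZMod 2, (-1 : ℤ) ^ (x.val + (x + y).val) = (-1 : ℤ) ^ y.val := by decide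
  rw [corrSum, sum_congr rfl fun n hn => by rw [h n (mem_range.mp hn), hterm], sum_const,
    card_range, nsmul_eq_mul]

theorem exists_pow_two_mul_lt_le {B N : ℕ} (hB : 0 < B) (hN : B < N) :
    ∃ K, 2 ^ K * B < N ∧ N ≤ 2 ^ (K + 1) * B := by
  have hq : (N - 1) / B ≠ 0 := (Nat.div_pos (by omega) hB).ne'
  refine ⟨Nat.log 2 ((N - 1) / B), ?_, ?_⟩
  · have := Nat.mul_le_mul_right B (Nat.pow_log_le_self 2 hq)
    have := Nat.div_mul_le_self (N - 1) B
    omega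
  · have : (N - 1) / B < 2 ^ (Nat.log 2 ((N - 1) / B) + 1) :=
      Nat.lt_pow_succ_log_self one_lt_two _
    have := (Nat.div_lt_iff_lt_mul hB).mp this
    omega

section PatternSequence

variable {ℓ a : ℕ} {r : ℕ → ZMod 2}

theorem pattern_rec_of_ne_zero (ha : a ≠ 0)
    (hr : ∀ n : ℕ, 1 ≤ n → r n = r (n / 2) + (if n % 2 ^ ℓ = a then 1 else 0)) (n : ℕ) :
    r n = r (n / 2) + (if n % 2 ^ ℓ = a then 1 else 0) := by
  rcases Nat.eq_zero_or_pos n with rfl | hn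
  · simp [Ne.symm ha]
  · exact hr n hn

theorem pattern_add_pow_two_mul (ha : a ≠ 0) (hr0 : r 0 = 0)
    (hr : ∀ n : ℕ, r n = r (n / 2) + (if n % 2 ^ ℓ = a then 1 else 0))
    {X : ℕ} (hX : 2 ^ ℓ ∣ 2 * X) (K : ℕ) :
    ∀ n < 2 ^ K, r (n + 2 ^ K * X) = r n + r (2 ^ K * X) := by
  induction K with
  | zero =>
    intro n hn
    obtain rfl : n = 0 := by omega
    simp [hr0]
  | succ K ih =>
    intro n hn
    have hdvd : 2 ^ ℓ ∣ 2 ^ (K + 1) * X := by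
      rw [pow_succ, mul_assoc]; exact Dvd.dvd.mul_left hX _
    obtain ⟨c, hc⟩ := hdvd
    have hhalf : ∀ m, (m + 2 ^ (K + 1) * X) / 2 = m / 2 + 2 ^ K * X := fun m => by
      rw [pow_succ, mul_right_comm, Nat.add_mul_div_right m _ two_pos]
    have hmod : ∀ m, (m + 2 ^ (K + 1) * X) % 2 ^ ℓ = m % 2 ^ ℓ := fun m => by
      rw [hc, Nat.add_mul_mod_self_left]
    have hpow : r (2 ^ (K + 1) * X) = r (2 ^ K * X) := by
      have h := hr (0 + 2 ^ (K + 1) * X)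
      rw [hhalf, hmod] at h
      simpa [Ne.symm ha] using h
    rw [hr (n + _), hhalf, hmod, ih (n / 2) (by rw [pow_succ] at hn; omega), hpow, hr n]
    ring

end PatternSequence

/-- For the pattern sequence `r 0 = 0`, `r n = r (n/2) + 1` if `n ≡ a (mod 2^ℓ)`
and `r n = r (n/2)` otherwise (with `1 ≤ a < 2^ℓ`), we have
`C₂(r,N) > N/(2^ℓ+2) - 2` for `N ≥ 2^{ℓ+1}+4`. -/
theorem pattern_sequence_correlation (ℓ a : ℕ) (ha1 : 1 ≤ a) (ha2 : a < 2 ^ ℓ)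
    (r : ℕ → ZMod 2) (hr0 : r 0 = 0)
    (hr : ∀ n : ℕ, 1 ≤ n → r n = r (n / 2) + (if n % 2 ^ ℓ = a then 1 else 0)) :
    ∀ N : ℕ, 2 ^ (ℓ + 1) + 4 ≤ N →
      (N : ℚ) / (2 ^ ℓ + 2) - 2 < (C2 r N : ℚ) := by
  intro N hN
  have hℓ : ℓ ≠ 0 := by rintro rfl; simp at ha2; omega
  set B := 2 ^ (ℓ - 1)
  have h2B : 2 * B = 2 ^ ℓ := by rw [← pow_succ']; congr 1; omega
  obtain ⟨K, hlt, hle⟩ := exists_pow_two_mul_lt_le (B := B + 1) (N := N) (by omega)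
    (by rw [pow_succ, ← h2B] at hN; omega)
  have hshift := pattern_add_pow_two_mul (by omega) hr0 (pattern_rec_of_ne_zero (by omega) hr)
    h2B.symm.dvd K
  have hC := abs_corrSum_le_C2 r (M := 2 ^ K) (d₁ := 0) (d₂ := 2 ^ K * B) (N := N) (by positivity)
    (by linarith)
  rw [corrSum_eq_of_forall_add (fun n hn => by simpa using hshift n hn)] at hC
  have hNK : N ≤ 2 ^ K * (2 ^ ℓ + 2) := by
    rw [← h2B]; exact hle.trans_eq (by ring)
  have hKC : (2 : ℚ) ^ K ≤ C2 r N := by simpa [abs_mul] using (Int.cast_le (R := ℚ)).mpr hC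
  have hdiv : (N : ℚ) / (2 ^ ℓ + 2) ≤ 2 ^ K := by
    rw [div_le_iff₀ (by positivity)]; exact_mod_cast hNK
  linarith
end

section
/- Let (w_n) be the binary sequence defined by w_{2n} = 1 and w_{2n+1} = w_n + 1 (in F_2) for all n ≥ 0. Then C_2(w_n, N) > N/3 − 2 for all N ≥ 6. -/
open Finset

theorem abs_sum_le_C2 (s : ℕ → ZMod 2) {N M d₁ d₂ : ℕ} (hd : d₁ < d₂) (hN : d₂ + M < N) :
    |∑ n ∈ range M, (-1 : ℤ) ^ ((s (n + d₁)).val + (s (n + d₂)).val)| ≤ C2 s N := by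
  refine le_csSup ⟨N, ?_⟩ ⟨M, d₁, d₂, hd, hN, rfl⟩
  rintro _ ⟨M', d₁', d₂', -, hN', rfl⟩
  calc |∑ n ∈ range M', (-1 : ℤ) ^ ((s (n + d₁')).val + (s (n + d₂')).val)|
      ≤ ∑ n ∈ range M', |(-1 : ℤ) ^ ((s (n + d₁')).val + (s (n + d₂')).val)| :=
        abs_sum_le_sum_abs _ _
    _ = M' := by simp
    _ ≤ N := by exact_mod_cast (by omega : M' ≤ N)

/-- `M / q` counts the indices `n < M` with `q ∣ n + 1`. -/
theorem sub_two_mul_div_le_sum {f : ℕ → ℤ} {q : ℕ} (hf : ∀ n, ¬ q ∣ n + 1 → f n = 1)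
    (hf_ge : ∀ n, -1 ≤ f n) (M : ℕ) : (M : ℤ) - 2 * (M / q : ℕ) ≤ ∑ n ∈ range M, f n := by
  induction M with
  | zero => simp
  | succ M ih =>
    rw [sum_range_succ, Nat.succ_div]
    by_cases hq : q ∣ M + 1
    · have := hf_ge M
      simp only [hq, if_true, Nat.cast_add, Nat.cast_one]
      linarith
    · simp only [hq, if_false, hf M hq, Nat.cast_add, Nat.cast_one, add_zero]
      linarith

section PerfectProfileSequence

variable {w : ℕ → ZMod 2} (hwe : ∀ n, w (2 * n) = 1) (hwo : ∀ n, w (2 * n + 1) = w n + 1)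
include hwe hwo

theorem add_four_eq_of_not_dvd {n : ℕ} (hn : ¬ 4 ∣ n + 1) : w (n + 4) = w n := by
  obtain ⟨m, rfl | rfl | rfl⟩ : ∃ m, n = 4 * m ∨ n = 4 * m + 1 ∨ n = 4 * m + 2 :=
    ⟨n / 4, by omega⟩
  · rw [show 4 * m + 4 = 2 * (2 * m + 2) by ring, show 4 * m = 2 * (2 * m) by ring, hwe, hwe]
  · rw [show 4 * m + 1 + 4 = 2 * (2 * (m + 1)) + 1 by ring,
      show 4 * m + 1 = 2 * (2 * m) + 1 by ring, hwo, hwo, hwe, hwe]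
  · rw [show 4 * m + 2 + 4 = 2 * (2 * m + 3) by ring, show 4 * m + 2 = 2 * (2 * m + 1) by ring,
      hwe, hwe]

theorem sub_two_mul_div_le_correlation_lag_four (M : ℕ) :
    (M : ℤ) - 2 * (M / 4 : ℕ) ≤
      ∑ n ∈ range M, (-1 : ℤ) ^ ((w (n + 0)).val + (w (n + 4)).val) := by
  refine sub_two_mul_div_le_sum (fun n hn => ?_) (fun n => ?_) M
  · rw [add_four_eq_of_not_dvd hwe hwo hn, add_zero]
    exact Even.neg_one_pow ⟨_, rfl⟩
  · simpa using neg_abs_le ((-1 : ℤ) ^ ((w (n + 0)).val + (w (n + 4)).val))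

end PerfectProfileSequence

/-- The sequence with `w (2n) = 1` and `w (2n+1) = w n + 1` (the unique sequence
with perfect linear complexity profile and perfect lattice profile) satisfies
`C₂(w,N) > N/3 - 2` for `N ≥ 6`. -/
theorem perfect_profile_sequence_correlation (w : ℕ → ZMod 2)
    (hwe : ∀ n : ℕ, w (2 * n) = 1) (hwo : ∀ n : ℕ, w (2 * n + 1) = w n + 1) :
    ∀ N : ℕ, 6 ≤ N → (N : ℚ) / 3 - 2 < (C2 w N : ℚ) := by
  intro N hN
  obtain ⟨M, rfl⟩ : ∃ M, N = M + 5 := ⟨N - 5, by omega⟩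
  have hC2 : (M : ℤ) - 2 * (M / 4 : ℕ) ≤ C2 w (M + 5) :=
    (sub_two_mul_div_le_correlation_lag_four hwe hwo M).trans
      ((le_abs_self _).trans (abs_sum_le_C2 w (by norm_num) (by omega)))
  have hdiv : 4 * (M / 4) ≤ M := Nat.mul_div_le M 4
  qify at hC2 hdiv
  push_cast
  linarith
end

section
/- Let k ≥ 2 and let (s_n) be a binary k-automatic sequence generated by a finite automaton with state set Q (reading the k-ary digits of n most significant digit first, with δ(q_0, 0) = q_0). Then C_2(s_n, N) ≥ N/(k(|Q|+1)) for all N ≥ k(|Q|+1). -/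
open Finset

theorem Nat.exists_mul_pow_lt_le_mul_pow_succ {k c N : ℕ} (hk : 1 < k) (hc : 0 < c)
    (hcN : c < N) : ∃ L, c * k ^ L < N ∧ N ≤ c * k ^ (L + 1) := by
  have hq : (N - 1) / c ≠ 0 := (Nat.div_pos (by omega) hc).ne'
  refine ⟨Nat.log k ((N - 1) / c), ?_, ?_⟩
  · have := Nat.mul_le_mul_left c (Nat.pow_log_le_self k hq)
    have := Nat.mul_div_le (N - 1) c
    omega
  · have : N - 1 < k ^ (Nat.log k ((N - 1) / c) + 1) * c :=
      (Nat.div_lt_iff_lt_mul hc).mp (Nat.lt_pow_succ_log_self hk _)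
    rw [mul_comm]
    omega

theorem Fintype.exists_lt_le_card_map_eq {Q : Type*} [Fintype Q] (f : ℕ → Q) :
    ∃ u v, u < v ∧ v ≤ Fintype.card Q ∧ f u = f v := by
  obtain ⟨a, b, hab, hf⟩ :=
    Fintype.exists_ne_map_eq_of_card_lt (fun i : Fin (Fintype.card Q + 1) => f i) (by simp)
  rcases lt_or_gt_of_ne hab with h | h
  · exact ⟨a, b, h, Nat.lt_succ_iff.mp b.isLt, hf⟩
  · exact ⟨b, a, h, Nat.lt_succ_iff.mp a.isLt, hf.symm⟩

section Automaton

variable {Q : Type*} (k : ℕ) (δ : Q → ℕ → Q) (q₀ : Q)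

def automatonState (n : ℕ) : Q :=
  ((Nat.digits k n).reverse).foldl δ q₀

variable {k δ q₀}

theorem foldl_replicate_of_fixed (hδ : δ q₀ 0 = q₀) (t : ℕ) :
    (List.replicate t 0).foldl δ q₀ = q₀ := by
  induction t with
  | zero => rfl
  | succ t ih => rw [List.replicate_succ, List.foldl_cons, hδ, ih]

theorem automatonState_add_mul_pow (hk : 1 < k) (hδ : δ q₀ 0 = q₀) {L n : ℕ} (hn : n < k ^ L)
    (u : ℕ) :
    automatonState k δ q₀ (n + u * k ^ L) =
      ((Nat.digits k n).reverse).foldl δ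
        ((List.replicate (L - (Nat.digits k n).length) 0).foldl δ (automatonState k δ q₀ u)) := by
  have hlen : (Nat.digits k n).length ≤ L := (Nat.digits_length_le_iff hk n).mpr hn
  rcases Nat.eq_zero_or_pos u with rfl | hu
  · simp [automatonState, foldl_replicate_of_fixed hδ]
  · have hdigits := Nat.digits_append_zeroes_append_digits
      (k := L - (Nat.digits k n).length) (n := n) hk hu
    rw [Nat.add_sub_cancel' hlen, mul_comm] at hdigits
    simp [automatonState, ← hdigits, List.reverse_replicate]

theorem automatonState_add_mul_pow_eq_of_eq (hk : 1 < k) (hδ : δ q₀ 0 = q₀) {L n u v : ℕ}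
    (hn : n < k ^ L) (huv : automatonState k δ q₀ u = automatonState k δ q₀ v) :
    automatonState k δ q₀ (n + u * k ^ L) = automatonState k δ q₀ (n + v * k ^ L) := by
  rw [automatonState_add_mul_pow hk hδ hn, automatonState_add_mul_pow hk hδ hn, huv]

end Automaton

theorem abs_sum_range_neg_one_pow_le (f : ℕ → ℕ) (M : ℕ) :
    |∑ n ∈ range M, (-1 : ℤ) ^ f n| ≤ M := by
  calc |∑ n ∈ range M, (-1 : ℤ) ^ f n| ≤ ∑ n ∈ range M, |(-1 : ℤ) ^ f n| :=
        abs_sum_le_sum_abs _ _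
    _ = M := by simp

theorem le_C2_of_eq_on_range {s : ℕ → ZMod 2} {N M d₁ d₂ : ℕ} (hd : d₁ < d₂) (hN : d₂ + M < N)
    (h : ∀ n < M, s (n + d₁) = s (n + d₂)) : (M : ℤ) ≤ C2 s N := by
  refine le_csSup ⟨N, ?_⟩ ⟨M, d₁, d₂, hd, hN, ?_⟩
  · rintro _ ⟨M', d₁', d₂', -, hN', rfl⟩
    exact (abs_sum_range_neg_one_pow_le _ M').trans (by exact_mod_cast (by omega : M' ≤ N))
  · have hterm : ∀ n ∈ range M, (-1 : ℤ) ^ ((s (n + d₁)).val + (s (n + d₂)).val) = 1 :=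
      fun n hn => by rw [h n (mem_range.mp hn)]; exact Even.neg_one_pow ⟨_, rfl⟩
    simp [sum_congr rfl hterm]

/-- A binary `k`-automatic sequence generated by an automaton with state set `Q`
(reading `k`-ary digits most significant first, with `δ q₀ 0 = q₀`) satisfies
`C₂(s,N) ≥ N/(k(|Q|+1))` for `N ≥ k(|Q|+1)`. -/
theorem automatic_sequence_correlation (k : ℕ) (hk : 2 ≤ k)
    (Q : Type) [Fintype Q] (δ : Q → ℕ → Q) (q₀ : Q) (τ : Q → ZMod 2)
    (hδ : δ q₀ 0 = q₀) (s : ℕ → ZMod 2)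
    (hs : ∀ n : ℕ, s n = τ (((Nat.digits k n).reverse).foldl δ q₀)) :
    ∀ N : ℕ, k * (Fintype.card Q + 1) ≤ N →
      (N : ℚ) / (k * (Fintype.card Q + 1)) ≤ (C2 s N : ℚ) := by
  intro N hN
  obtain ⟨L, hL_lt, hL_le⟩ := Nat.exists_mul_pow_lt_le_mul_pow_succ
    (c := Fintype.card Q + 1) hk (by omega) (by nlinarith : Fintype.card Q + 1 < N)
  obtain ⟨u, v, huv, hv, hstate⟩ := Fintype.exists_lt_le_card_map_eq (automatonState k δ q₀)
  have hagree : ∀ n < k ^ L, s (n + u * k ^ L) = s (n + v * k ^ L) := fun n hn => by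
    rw [hs, hs]
    exact congrArg τ (automatonState_add_mul_pow_eq_of_eq hk hδ hn hstate)
  have hpos : 0 < k ^ L := by positivity
  have hC2 : ((k ^ L : ℕ) : ℤ) ≤ C2 s N :=
    le_C2_of_eq_on_range (Nat.mul_lt_mul_of_pos_right huv hpos) (by nlinarith) hagree
  have hN' : N ≤ k ^ L * (k * (Fintype.card Q + 1)) := hL_le.trans_eq (by ring)
  calc (N : ℚ) / (k * (Fintype.card Q + 1)) ≤ k ^ L := by
        rw [div_le_iff₀ (by positivity)]
        exact_mod_cast hN'
    _ ≤ C2 s N := by exact_mod_cast hC2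
end
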